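/- arXiv:1305.6324 — 3 statements merged into one kernel-verified Lean document; each statement's English description precedes it below -/
import Mathlib

section
/- (Aitken / Gauss–Markov theorem, generalized) Let m = Jx + e with E[e]=0, Cov(e)=Ω positive definite, and J of rank p. For any linear unbiased estimator Am (i.e., AJ = Id_p), the covariance AΩA' satisfies AΩA' ≥ (J'Ω⁻¹J)⁻¹ in the Loewner order, i.e., AΩA' − (J'Ω⁻¹J)⁻¹ is positive semidefinite. Hence the GLS estimator is BLUE. -/
open Matrix ComplexOrder

/-!
Put `B = Jᴴ Ω⁻¹ J` and let `G = B⁻¹ Jᴴ Ω⁻¹` be the GLS estimator. For every `A` with `A J = 1`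
one has `G Ω Aᴴ = B⁻¹`; applied to `A` and to `G` itself this makes the cross terms of
`(A - G) Ω (A - G)ᴴ` collapse, so `A Ω Aᴴ - B⁻¹ = (A - G) Ω (A - G)ᴴ`, which is positive
semidefinite because `Ω` is.
-/

namespace Matrix

variable {m n : Type*} [Fintype m] [Fintype n] [DecidableEq n]

theorem mulVec_injective_of_mul_eq_one {R : Type*} [Semiring R] {A : Matrix n m R}
    {J : Matrix m n R} (hA : A * J = 1) : Function.Injective J.mulVec :=
  Function.LeftInverse.injective (g := A.mulVec) fun x => by
    rw [mulVec_mulVec, hA, one_mulVec]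

variable [DecidableEq m] {𝕜 : Type*} [RCLike 𝕜] {J : Matrix m n 𝕜} {Ω : Matrix m m 𝕜}
  {A : Matrix n m 𝕜}

theorem PosDef.conjTranspose_mul_inv_mul_of_mul_eq_one (hΩ : Ω.PosDef) (hA : A * J = 1) :
    (Jᴴ * Ω⁻¹ * J).PosDef :=
  hΩ.inv.conjTranspose_mul_mul_same (mulVec_injective_of_mul_eq_one hA)

noncomputable def glsEstimator (J : Matrix m n 𝕜) (Ω : Matrix m m 𝕜) : Matrix n m 𝕜 :=
  (Jᴴ * Ω⁻¹ * J)⁻¹ * Jᴴ * Ω⁻¹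

theorem glsEstimator_mul (hB : IsUnit (Jᴴ * Ω⁻¹ * J).det) : glsEstimator J Ω * J = 1 := by
  rw [glsEstimator, Matrix.mul_assoc, Matrix.mul_assoc, ← Matrix.mul_assoc Jᴴ,
    nonsing_inv_mul _ hB]

theorem glsEstimator_mul_mul_conjTranspose (hΩ : IsUnit Ω.det) (hA : A * J = 1) :
    glsEstimator J Ω * Ω * Aᴴ = (Jᴴ * Ω⁻¹ * J)⁻¹ := by
  rw [glsEstimator, nonsing_inv_mul_cancel_right (A := Ω) _ hΩ, Matrix.mul_assoc, ← conjTranspose_mul,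
    hA, conjTranspose_one, Matrix.mul_one]

theorem mul_mul_conjTranspose_sub_inv_eq (hΩ : Ω.PosDef) (hA : A * J = 1) :
    A * Ω * Aᴴ - (Jᴴ * Ω⁻¹ * J)⁻¹ =
      (A - glsEstimator J Ω) * Ω * (A - glsEstimator J Ω)ᴴ := by
  have hB := hΩ.conjTranspose_mul_inv_mul_of_mul_eq_one hA
  have hΩdet : IsUnit Ω.det := (isUnit_iff_isUnit_det Ω).mp hΩ.isUnit
  have hGA := glsEstimator_mul_mul_conjTranspose hΩdet hA
  have hGG := glsEstimator_mul_mul_conjTranspose hΩdet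
    (glsEstimator_mul ((isUnit_iff_isUnit_det _).mp hB.isUnit))
  have hAG : A * Ω * (glsEstimator J Ω)ᴴ = (Jᴴ * Ω⁻¹ * J)⁻¹ := by
    have h := congrArg conjTranspose hGA
    rwa [conjTranspose_mul, conjTranspose_mul, conjTranspose_conjTranspose, hΩ.isHermitian.eq,
      hB.inv.isHermitian.eq, ← Matrix.mul_assoc] at h
  rw [conjTranspose_sub, Matrix.sub_mul, Matrix.sub_mul, Matrix.mul_sub, Matrix.mul_sub, hGA,
    hGG, hAG]
  abel

theorem PosDef.posSemidef_mul_mul_conjTranspose_sub_inv (hΩ : Ω.PosDef) (hA : A * J = 1) :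
    (A * Ω * Aᴴ - (Jᴴ * Ω⁻¹ * J)⁻¹).PosSemidef := by
  rw [mul_mul_conjTranspose_sub_inv_eq hΩ hA]
  exact hΩ.posSemidef.mul_mul_conjTranspose_same _

end Matrix

theorem stmt_5_general {N p : ℕ} (J : Matrix (Fin N) (Fin p) ℂ)
    (Om : Matrix (Fin N) (Fin N) ℂ) (hOm : Om.PosDef)
    (A : Matrix (Fin p) (Fin N) ℂ) (hA : A * J = 1) :
    (A * Om * Aᴴ - (Jᴴ * Om⁻¹ * J)⁻¹).PosSemidef :=
  hOm.posSemidef_mul_mul_conjTranspose_sub_inv hA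

/-- Aitken / generalized Gauss–Markov theorem: for any linear unbiased estimator
`A m` (i.e. `A J = 1`), the covariance `A Ω Aᴴ` dominates `(Jᴴ Ω⁻¹ J)⁻¹` in the
Loewner order, i.e. their difference is positive semidefinite. -/
theorem stmt_5 {N p : ℕ} (J : Matrix (Fin N) (Fin p) ℂ)
    (Om : Matrix (Fin N) (Fin N) ℂ) (hJ : J.rank = p) (hOm : Om.PosDef)
    (A : Matrix (Fin p) (Fin N) ℂ) (hA : A * J = 1) :
    (A * Om * Aᴴ - (Jᴴ * Om⁻¹ * J)⁻¹).PosSemidef :=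
  stmt_5_general J Om hOm A hA
end

section
/- The two-step least squares procedure with P₀ = Ω⁻¹, P₁ = J₀'Ω⁻¹J₀ (the inverse of the covariance (J₀'Ω⁻¹J₀)⁻¹ of the first-step estimator) and P̃₀ = Ω⁻¹ is transitive: (J₁'P₁J₁)⁻¹J₁'P₁(J₀'Ω⁻¹J₀)⁻¹J₀'Ω⁻¹ = (J₁'J₀'Ω⁻¹J₀J₁)⁻¹J₁'J₀'Ω⁻¹. That is, GLS applied in two stages (using the inverse covariance of the intermediate estimator as the weight) agrees with GLS applied in one stage. -/
open Matrix ComplexOrder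

/-- Two-step GLS, with the inverse covariance of the intermediate estimator
(`P₁ = J₀ᴴΩ⁻¹J₀`) as second-stage weight, agrees with one-step GLS. -/
theorem stmt_7 {N₀ N₁ N₂ : ℕ} (h₂₁ : N₂ ≤ N₁) (h₁₀ : N₁ ≤ N₀)
    (Om : Matrix (Fin N₀) (Fin N₀) ℂ) (hOm : Om.PosDef)
    (J₀ : Matrix (Fin N₀) (Fin N₁) ℂ) (J₁ : Matrix (Fin N₁) (Fin N₂) ℂ)
    (hJ₀ : J₀.rank = N₁) (hJ₁ : J₁.rank = N₂) :
    (J₁ᴴ * (J₀ᴴ * Om⁻¹ * J₀) * J₁)⁻¹ * J₁ᴴ * (J₀ᴴ * Om⁻¹ * J₀) *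
        ((J₀ᴴ * Om⁻¹ * J₀)⁻¹ * J₀ᴴ * Om⁻¹) =
      ((J₀ * J₁)ᴴ * Om⁻¹ * (J₀ * J₁))⁻¹ * (J₀ * J₁)ᴴ * Om⁻¹ := by
  -- columns of J₀ are linearly independent
  have hli : LinearIndependent ℂ (fun i ↦ J₀ᵀ i) := by
    rw [linearIndependent_iff_card_eq_finrank_span]
    change _ = Set.finrank ℂ (Set.range J₀.col)
    rw [Set.finrank, ← Matrix.rank_eq_finrank_span_cols, hJ₀, Fintype.card_fin]
  have hinj : Function.Injective J₀.mulVec := Matrix.mulVec_injective_iff.mpr hli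
  -- P₁ := J₀ᴴ Ω⁻¹ J₀ is positive definite
  have hP : (J₀ᴴ * Om⁻¹ * J₀).PosDef := by
    refine posDef_iff_dotProduct_mulVec.mpr ⟨Matrix.isHermitian_conjTranspose_mul_mul J₀ hOm.inv.1, fun x hx => ?_⟩
    have hx' : J₀ *ᵥ x ≠ 0 := by
      intro h
      exact hx (hinj (h.trans (Matrix.mulVec_zero J₀).symm))
    simpa only [star_mulVec, Matrix.dotProduct_mulVec, Matrix.vecMul_vecMul]
      using (posDef_iff_dotProduct_mulVec.mp hOm.inv).2 hx'
  have hA : (J₀ᴴ * Om⁻¹ * J₀) * (J₀ᴴ * Om⁻¹ * J₀)⁻¹ = 1 :=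
    Matrix.mul_nonsing_inv _ (Matrix.isUnit_iff_isUnit_det _ |>.mp hP.isUnit)
  have key : (J₀ᴴ * Om⁻¹ * J₀) * ((J₀ᴴ * Om⁻¹ * J₀)⁻¹ * J₀ᴴ * Om⁻¹)
      = J₀ᴴ * Om⁻¹ := by
    rw [← Matrix.mul_assoc _ _ Om⁻¹, ← Matrix.mul_assoc, hA, Matrix.one_mul]
  have hRHS : (J₀ * J₁)ᴴ * Om⁻¹ * (J₀ * J₁) = J₁ᴴ * (J₀ᴴ * Om⁻¹ * J₀) * J₁ := by
    rw [Matrix.conjTranspose_mul]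
    simp only [Matrix.mul_assoc]
  rw [Matrix.mul_assoc, key, hRHS, Matrix.conjTranspose_mul]
  simp only [Matrix.mul_assoc]
end

section
/- (Inverse of the generalized convolution operator) Let Q : ℤ → ℂ be absolutely summable with F{Q}(f) ≠ 0 for all f, and suppose δt²/F{Q} is the DTFT of some absolutely summable Q⁻ : ℤ → ℂ. Then for every absolutely summable X : ℤ × Fin p → ℂ, Q⁻ ∗ (Q ∗ X) = X and Q ∗ (Q⁻ ∗ X) = X. -/
/-!
Convolution turns into multiplication under the DTFT, so the hypothesis says that the Fourier
series of `Qinv ∗ Q` is identically `1`. Integrating against `e^{2πinx}` over a period recovers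
the coefficients of an absolutely convergent Fourier series, hence `Qinv ∗ Q` is the unit impulse
`δ₀`. Associativity of convolution of absolutely summable sequences then gives
`Qinv ∗ (Q ∗ X) = (Qinv ∗ Q) ∗ X = X`, and commutativity gives the other identity.
-/

open MeasureTheory

/-- The complex exponential `e^{-2πix}`. -/
noncomputable def cexp (x : ℝ) : ℂ := Complex.exp (-2 * Real.pi * x * Complex.I)

/-- The Discrete Time Fourier Transform of a summable `G : ℤ → ℂ`. -/
noncomputable def dtft (δt : ℝ) (G : ℤ → ℂ) (f : ℝ) : ℂ :=
  (δt : ℂ) * ∑' k : ℤ, G k * cexp (k * f * δt)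

noncomputable def discreteConv {G R : Type*} [AddGroup G] [NormedRing R] (A B : G → R) (k : G) :
    R :=
  ∑' i, A (k - i) * B i

def subShear (G : Type*) [AddGroup G] : G × G ≃ G × G where
  toFun p := (p.1 - p.2, p.2)
  invFun p := (p.1 + p.2, p.2)
  left_inv p := by simp
  right_inv p := by simp

section discreteConv

variable {G : Type*} [AddCommGroup G]

theorem discreteConv_comm {R : Type*} [NormedCommRing R] (A B : G → R) :
    discreteConv A B = discreteConv B A := by
  ext k
  rw [discreteConv, ← (Equiv.subLeft k).tsum_eq]
  simp [discreteConv, mul_comm]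

variable {R : Type*} [NormedRing R] {A B C : G → R}

theorem single_discreteConv [DecidableEq G] : discreteConv (Pi.single 0 1) C = C := by
  ext k
  rw [discreteConv, tsum_eq_single k (fun i hi => by simp [sub_eq_zero, Ne.symm hi])]
  simp

theorem summable_norm_mul_sub (hA : Summable fun k => ‖A k‖) (hB : Summable fun k => ‖B k‖) :
    Summable fun p : G × G => ‖A (p.1 - p.2) * B p.2‖ :=
  (subShear G).summable_iff.mpr (hA.mul_norm hB) |>.congr fun p => by simp [subShear]

theorem summable_norm_discreteConv (hA : Summable fun k => ‖A k‖)
    (hB : Summable fun k => ‖B k‖) : Summable fun k => ‖discreteConv A B k‖ := by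
  have h := summable_norm_mul_sub hA hB
  refine .of_nonneg_of_le (fun _ => norm_nonneg _) (fun k => ?_) h.prod
  exact norm_tsum_le_tsum_norm (h.prod_factor k)

variable [CompleteSpace R]

theorem tsum_discreteConv (hA : Summable fun k => ‖A k‖) (hB : Summable fun k => ‖B k‖) :
    ∑' k, discreteConv A B k = (∑' k, A k) * ∑' k, B k := by
  rw [tsum_mul_tsum_of_summable_norm hA hB, ← (subShear G).tsum_eq]
  exact ((summable_norm_mul_sub hA hB).of_norm.tsum_prod' fun k =>
    ((summable_norm_mul_sub hA hB).prod_factor k).of_norm).symm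

theorem discreteConv_assoc (hA : Summable fun k => ‖A k‖) (hB : Summable fun k => ‖B k‖)
    (hC : Summable fun k => ‖C k‖) :
    discreteConv A (discreteConv B C) = discreteConv (discreteConv A B) C := by
  ext k
  have hF : Summable fun p : G × G => A (k - p.1) * (B (p.1 - p.2) * C p.2) := by
    refine .of_norm <| .of_nonneg_of_le (fun _ => norm_nonneg _) (fun p => ?_)
      ((summable_norm_mul_sub hB hC).mul_left (∑' m, ‖A m‖))
    exact (norm_mul_le _ _).trans <| mul_le_mul_of_nonneg_right
      (hA.le_tsum _ fun _ _ => norm_nonneg _) (norm_nonneg _)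
  have hshift (j : G) :
      ∑' i, A (k - i) * (B (i - j) * C j) = discreteConv A B (k - j) * C j := by
    rw [discreteConv, ← ((summable_norm_mul_sub hA hB).prod_factor (k - j)).of_norm.tsum_mul_right,
      ← (Equiv.addRight j).tsum_eq]
    simp [mul_assoc, sub_add_eq_sub_sub_swap]
  calc discreteConv A (discreteConv B C) k
      = ∑' i, ∑' j, A (k - i) * (B (i - j) * C j) := tsum_congr fun i =>
        (((summable_norm_mul_sub hB hC).prod_factor i).of_norm.tsum_mul_left _).symm
    _ = ∑' j, ∑' i, A (k - i) * (B (i - j) * C j) :=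
        (Summable.tsum_comm (f := fun i j => A (k - i) * (B (i - j) * C j)) hF).symm
    _ = discreteConv (discreteConv A B) C k := tsum_congr hshift

theorem discreteConv_discreteConv_of_eq_single [DecidableEq G] (hA : Summable fun k => ‖A k‖)
    (hB : Summable fun k => ‖B k‖) (hC : Summable fun k => ‖C k‖)
    (hAB : discreteConv A B = Pi.single 0 1) : discreteConv A (discreteConv B C) = C := by
  rw [discreteConv_assoc hA hB hC, hAB, single_discreteConv]

end discreteConv

theorem cexp_add (x y : ℝ) : cexp (x + y) = cexp x * cexp y := by
  simp only [cexp, ← Complex.exp_add]; push_cast; ring_nf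

theorem norm_cexp (x : ℝ) : ‖cexp x‖ = 1 := by
  simpa [cexp, mul_right_comm _ Complex.I] using Complex.norm_exp_ofReal_mul_I (-2 * Real.pi * x)

@[fun_prop]
theorem continuous_cexp : Continuous cexp := by
  unfold cexp; fun_prop

theorem summable_norm_mul_cexp {S : ℤ → ℂ} (hS : Summable fun k => ‖S k‖) (x : ℝ) :
    Summable fun k : ℤ => ‖S k * cexp (k * x)‖ :=
  hS.congr fun k => by rw [norm_mul, norm_cexp, mul_one]

theorem integral_cexp_intCast_mul (m : ℤ) :
    ∫ x in (0 : ℝ)..1, cexp (m * x) = if m = 0 then 1 else 0 := by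
  split_ifs with hm
  · simp [hm, cexp]
  have hc : ((-m : ℤ) : ℂ) * (2 * Real.pi * Complex.I) ≠ 0 := by simp [Real.pi_ne_zero, hm]
  have h (x : ℝ) :
      cexp (m * x) = Complex.exp (((-m : ℤ) : ℂ) * (2 * Real.pi * Complex.I) * x) := by
    rw [cexp]; push_cast; ring_nf
  simp_rw [h]
  rw [integral_exp_mul_complex hc, Complex.ofReal_one, mul_one, Complex.exp_int_mul_two_pi_mul_I]
  simp

theorem integral_tsum_mul_cexp {S : ℤ → ℂ} (hS : Summable fun k => ‖S k‖) (n : ℤ) :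
    ∫ x in (0 : ℝ)..1, (∑' k, S k * cexp (k * x)) * cexp (-n * x) = S n := by
  have hterm (k : ℤ) (x : ℝ) :
      S k * cexp (k * x) * cexp (-n * x) = S k * cexp ((k - n : ℤ) * x) := by
    rw [mul_assoc, ← cexp_add]; push_cast; ring_nf
  simp_rw [← tsum_mul_right, hterm]
  have hcont (k : ℤ) : Continuous fun x : ℝ => S k * cexp ((k - n : ℤ) * x) := by fun_prop
  refine ((intervalIntegral.hasSum_integral_of_dominated_convergence (fun k _ => ‖S k‖)
    (fun k => (hcont k).aestronglyMeasurable) (fun k => ?_) (.of_forall fun _ _ => hS)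
    intervalIntegrable_const ?_).tsum_eq.symm.trans ?_)
  · exact .of_forall fun x _ => by rw [norm_mul, norm_cexp, mul_one]
  · exact .of_forall fun x _ =>
      (hS.of_norm_bounded fun k => by rw [norm_mul, norm_cexp, mul_one]).hasSum
  · simp_rw [intervalIntegral.integral_const_mul, integral_cexp_intCast_mul, sub_eq_zero, mul_ite,
      mul_one, mul_zero]
    exact tsum_ite_eq n _

theorem eq_single_of_tsum_mul_cexp_eq_const {S : ℤ → ℂ} (hS : Summable fun k => ‖S k‖) {c : ℂ}
    (h : ∀ x : ℝ, ∑' k, S k * cexp (k * x) = c) : S = Pi.single 0 c := by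
  ext n
  rw [← integral_tsum_mul_cexp hS n]
  simp_rw [h, intervalIntegral.integral_const_mul, ← Int.cast_neg, integral_cexp_intCast_mul]
  simp [Pi.single_apply]

theorem discreteConv_mul_cexp (A B : ℤ → ℂ) (x : ℝ) (k : ℤ) :
    discreteConv (fun i => A i * cexp (i * x)) (fun i => B i * cexp (i * x)) k =
      discreteConv A B k * cexp (k * x) := by
  rw [discreteConv, discreteConv, ← tsum_mul_right]
  refine tsum_congr fun i => ?_
  rw [mul_mul_mul_comm, ← cexp_add]
  push_cast
  ring_nf

theorem tsum_discreteConv_mul_cexp {A B : ℤ → ℂ} (hA : Summable fun k => ‖A k‖)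
    (hB : Summable fun k => ‖B k‖) (x : ℝ) :
    ∑' k, discreteConv A B k * cexp (k * x) =
      (∑' k, A k * cexp (k * x)) * ∑' k, B k * cexp (k * x) := by
  simp_rw [← discreteConv_mul_cexp]
  exact tsum_discreteConv (summable_norm_mul_cexp hA x) (summable_norm_mul_cexp hB x)

theorem stmt_17_general {p : ℕ} (δt : ℝ) (Q Qinv : ℤ → ℂ)
    (hQ : Summable fun k : ℤ => ‖Q k‖)
    (hQ0 : ∀ f : ℝ, dtft δt Q f ≠ 0)
    (hQinv : Summable fun k : ℤ => ‖Qinv k‖)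
    (hinv : ∀ f : ℝ, dtft δt Qinv f = (δt : ℂ) ^ 2 / dtft δt Q f)
    (X : ℤ → Fin p → ℂ) (hX : ∀ l, Summable fun k : ℤ => ‖X k l‖) :
    (∀ (k : ℤ) (l : Fin p),
        (∑' i : ℤ, Qinv (k - i) * ∑' j : ℤ, Q (i - j) * X j l) = X k l) ∧
    (∀ (k : ℤ) (l : Fin p),
        (∑' i : ℤ, Q (k - i) * ∑' j : ℤ, Qinv (i - j) * X j l) = X k l) := by
  have hδt : (δt : ℂ) ≠ 0 := left_ne_zero_of_mul (hQ0 0)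
  have hprod (x : ℝ) : (∑' k, Qinv k * cexp (k * x)) * ∑' k, Q k * cexp (k * x) = 1 := by
    have h := hinv (x / δt)
    have hQx := hQ0 (x / δt)
    simp only [dtft, mul_assoc, div_mul_cancel₀ _ (Complex.ofReal_ne_zero.mp hδt)] at h hQx
    rw [eq_div_iff hQx] at h
    exact mul_left_cancel₀ (pow_ne_zero 2 hδt) (by linear_combination h)
  have hker : discreteConv Qinv Q = Pi.single 0 1 :=
    eq_single_of_tsum_mul_cexp_eq_const (summable_norm_discreteConv hQinv hQ) fun x => by
      rw [tsum_discreteConv_mul_cexp hQinv hQ, hprod]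
  refine ⟨fun k l => ?_, fun k l => ?_⟩
  · exact congrFun (discreteConv_discreteConv_of_eq_single hQinv hQ (hX l) hker) k
  · exact congrFun (discreteConv_discreteConv_of_eq_single hQ hQinv (hX l)
      (discreteConv_comm Q Qinv ▸ hker)) k

/-- If `F{Q}` never vanishes and `δt²/F{Q}` is the DTFT of an absolutely
summable `Qinv`, then convolution with `Qinv` inverts convolution with `Q`. -/
theorem stmt_17 {p : ℕ} (δt : ℝ) (hδt : 0 < δt) (Q Qinv : ℤ → ℂ)
    (hQ : Summable fun k : ℤ => ‖Q k‖)
    (hQ0 : ∀ f : ℝ, dtft δt Q f ≠ 0)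
    (hQinv : Summable fun k : ℤ => ‖Qinv k‖)
    (hinv : ∀ f : ℝ, dtft δt Qinv f = (δt : ℂ) ^ 2 / dtft δt Q f)
    (X : ℤ → Fin p → ℂ) (hX : ∀ l, Summable fun k : ℤ => ‖X k l‖) :
    (∀ (k : ℤ) (l : Fin p),
        (∑' i : ℤ, Qinv (k - i) * ∑' j : ℤ, Q (i - j) * X j l) = X k l) ∧
    (∀ (k : ℤ) (l : Fin p),
        (∑' i : ℤ, Q (k - i) * ∑' j : ℤ, Qinv (i - j) * X j l) = X k l) :=
  stmt_17_general δt Q Qinv hQ hQ0 hQinv hinv X hX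
end
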